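/- Let L ∈ {ALC, ALCI} and Q ∈ {AQ, FullCQ, CQ, UCQ}. Let E be a collection of labeled ABox-Q examples, and let E' be the collection obtained from E by adding, for each positive example (A, q) ∈ E⁺, a negative example (A, X(a)) where X is a concept name not mentioned in E and a ∈ ind(A). Then E admits a fitting L-ontology that is consistent with all ABoxes occurring in positive examples of E if and only if E' admits a fitting L-ontology. -/

import Mathlib

/-!
Formalization background for "Fitting Ontologies to ABox-Query Examples":
description logics ALC / ALCI / ALCQ, ABoxes, interpretations (with standard
names assumption), ontologies, queries (AQ / CQ / full CQ / UCQ), fitting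
problems, homomorphisms, forest models, unravelings, etc.
-/

namespace DLFit

/-- Roles: role names and inverse roles (both indexed by natural numbers). -/
inductive DLRole : Type
  | name (r : ℕ)
  | inv (r : ℕ)
deriving DecidableEq

/-- Concepts of ALCIQ, a common superlanguage of ALC, ALCI and ALCQ. -/
inductive Concept : Type
  | top
  | atom (A : ℕ)
  | neg (C : Concept)
  | inter (C D : Concept)
  | ex (r : DLRole) (C : Concept)
  | atLeast (n : ℕ) (r : DLRole) (C : Concept)
  | atMost (n : ℕ) (r : DLRole) (C : Concept)
deriving DecidableEq

/-- A concept uses no inverse roles. -/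
def Concept.invFree : Concept → Prop
  | .top => True
  | .atom _ => True
  | .neg C => C.invFree
  | .inter C D => C.invFree ∧ D.invFree
  | .ex r C => (∃ m, r = DLRole.name m) ∧ C.invFree
  | .atLeast _ r C => (∃ m, r = DLRole.name m) ∧ C.invFree
  | .atMost _ r C => (∃ m, r = DLRole.name m) ∧ C.invFree

/-- A concept uses no qualified number restrictions. -/
def Concept.countFree : Concept → Prop
  | .top => True
  | .atom _ => True
  | .neg C => C.countFree
  | .inter C D => C.countFree ∧ D.countFree
  | .ex _ C => C.countFree
  | .atLeast _ _ _ => False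
  | .atMost _ _ _ => False

/-- An ontology is a finite set of concept inclusions `C ⊑ D`. -/
abbrev Ontology := Finset (Concept × Concept)

/-- The two ontology languages considered: ALC and ALCI. -/
inductive DL : Type
  | alc
  | alci
deriving DecidableEq

/-- Membership of an ontology in ALC resp. ALCI. -/
def OntologyInLang : DL → Ontology → Prop
  | .alc, O => ∀ ci ∈ O, ci.1.invFree ∧ ci.1.countFree ∧ ci.2.invFree ∧ ci.2.countFree
  | .alci, O => ∀ ci ∈ O, ci.1.countFree ∧ ci.2.countFree

/-- An ALCQ-ontology: no inverse roles (number restrictions allowed). -/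
def OntologyIsALCQ (O : Ontology) : Prop := ∀ ci ∈ O, ci.1.invFree ∧ ci.2.invFree

/-- ABox assertions `A(a)` and `r(a,b)`. -/
inductive Assertion : Type
  | conc (A : ℕ) (a : ℕ)
  | role (r : ℕ) (a b : ℕ)
deriving DecidableEq

/-- An ABox is a finite set of assertions. -/
abbrev ABox := Finset Assertion

def AssertionInds : Assertion → Finset ℕ
  | .conc _ a => {a}
  | .role _ a b => {a, b}

/-- The individual names occurring in an ABox. -/
def ABoxInds (A : ABox) : Finset ℕ := A.biUnion AssertionInds

def AssertionCNs : Assertion → Finset ℕ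
  | .conc P _ => {P}
  | .role _ _ _ => ∅

/-- The concept names occurring in an ABox. -/
def ABoxCNs (A : ABox) : Finset ℕ := A.biUnion AssertionCNs

/-- An interpretation, with the standard names assumption: every individual
name denotes itself, i.e. the (injective) map `indI` embeds the individual
names into the domain. -/
structure Interp : Type 1 where
  Dom : Type
  indI : ℕ → Dom
  indI_inj : Function.Injective indI
  concI : ℕ → Set Dom
  roleI : ℕ → Set (Dom × Dom)

/-- Semantics of (possibly inverse) roles. -/
def Interp.rSem (I : Interp) : DLRole → Set (I.Dom × I.Dom)
  | .name r => I.roleI r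
  | .inv r => {p | (p.2, p.1) ∈ I.roleI r}

/-- Semantics of concepts. -/
def Interp.cSem (I : Interp) : Concept → Set I.Dom
  | .top => Set.univ
  | .atom A => I.concI A
  | .neg C => (I.cSem C)ᶜ
  | .inter C D => I.cSem C ∩ I.cSem D
  | .ex r C => {d | ∃ e, (d, e) ∈ I.rSem r ∧ e ∈ I.cSem C}
  | .atLeast n r C => {d | (n : ℕ∞) ≤ {e | (d, e) ∈ I.rSem r ∧ e ∈ I.cSem C}.encard}
  | .atMost n r C => {d | {e | (d, e) ∈ I.rSem r ∧ e ∈ I.cSem C}.encard ≤ (n : ℕ∞)}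

/-- `I` is a model of the ontology `O`. -/
def Interp.IsModelOf (I : Interp) (O : Ontology) : Prop :=
  ∀ ci ∈ O, I.cSem ci.1 ⊆ I.cSem ci.2

def Interp.SatAssertion (I : Interp) : Assertion → Prop
  | .conc P a => I.indI a ∈ I.concI P
  | .role r a b => (I.indI a, I.indI b) ∈ I.roleI r

/-- `I` is a model of the ABox `A` (individual names interpreted as themselves). -/
def Interp.SatABox (I : Interp) (A : ABox) : Prop := ∀ α ∈ A, I.SatAssertion α

/-- An ABox is consistent with an ontology if they have a common model. -/
def ConsistentWith (A : ABox) (O : Ontology) : Prop :=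
  ∃ I : Interp, I.IsModelOf O ∧ I.SatABox A

/-- Homomorphism between ABoxes (need not fix individual names). -/
def ABoxHom (h : ℕ → ℕ) (A B : ABox) : Prop :=
  (∀ P a, Assertion.conc P a ∈ A → Assertion.conc P (h a) ∈ B) ∧
  (∀ r a b, Assertion.role r a b ∈ A → Assertion.role r (h a) (h b) ∈ B)

/-- Homomorphism from an ABox into an interpretation. -/
def ABoxIHom (I : Interp) (h : ℕ → I.Dom) (A : ABox) : Prop :=
  (∀ P a, Assertion.conc P a ∈ A → h a ∈ I.concI P) ∧
  (∀ r a b, Assertion.role r a b ∈ A → (h a, h b) ∈ I.roleI r)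

/-- Local injectivity of a homomorphism on an ABox. -/
def LocInj {D : Type} (h : ℕ → D) (A : ABox) : Prop :=
  ∀ r a b c, Assertion.role r a b ∈ A → Assertion.role r a c ∈ A → h b = h c → b = c

/-- The ABoxes in a collection of examples have pairwise disjoint individual names. -/
def PairwiseDisjInds (S : Finset ABox) : Prop :=
  ∀ A ∈ S, ∀ B ∈ S, A ≠ B → Disjoint (ABoxInds A) (ABoxInds B)

/-! ## Queries -/

/-- Terms of a query: variables and individual names. -/
inductive Term : Type
  | var (x : ℕ)
  | ind (a : ℕ)
deriving DecidableEq

/-- Atoms of a query. -/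
inductive Atom : Type
  | catom (A : ℕ) (t : Term)
  | ratom (r : ℕ) (t t' : Term)
deriving DecidableEq

/-- A (Boolean) conjunctive query, viewed as its finite set of atoms;
all variables are (implicitly) existentially quantified. -/
abbrev CQ := Finset Atom

/-- A union of conjunctive queries. -/
abbrev UCQ := Finset CQ

def TermInds : Term → Finset ℕ
  | .var _ => ∅
  | .ind a => {a}

def AtomInds : Atom → Finset ℕ
  | .catom _ t => TermInds t
  | .ratom _ t t' => TermInds t ∪ TermInds t'

/-- Individual names occurring in a CQ. -/
def CQInds (q : CQ) : Finset ℕ := q.biUnion AtomInds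

def UCQInds (q : UCQ) : Finset ℕ := q.biUnion CQInds

def AtomCNs : Atom → Finset ℕ
  | .catom P _ => {P}
  | .ratom _ _ _ => ∅

/-- Concept names occurring in a CQ. -/
def CQCNs (q : CQ) : Finset ℕ := q.biUnion AtomCNs

def UCQCNs (q : UCQ) : Finset ℕ := q.biUnion CQCNs

def AtomGround : Atom → Prop
  | .catom _ t => ∃ a, t = Term.ind a
  | .ratom _ t t' => (∃ a, t = Term.ind a) ∧ (∃ a, t' = Term.ind a)

/-- A full CQ: no (existentially quantified) variables. -/
def CQIsFull (q : CQ) : Prop := ∀ α ∈ q, AtomGround α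

def TermEval (I : Interp) (v : ℕ → I.Dom) : Term → I.Dom
  | .var x => v x
  | .ind a => I.indI a

def Interp.SatAtom (I : Interp) (v : ℕ → I.Dom) : Atom → Prop
  | .catom P t => TermEval I v t ∈ I.concI P
  | .ratom r t t' => (TermEval I v t, TermEval I v t') ∈ I.roleI r

/-- `I ⊨ q` for a CQ `q`: there is a (strong) homomorphism of the atoms of `q`
into `I` that is the identity on individual names. -/
def Interp.SatCQ (I : Interp) (q : CQ) : Prop :=
  ∃ v : ℕ → I.Dom, ∀ α ∈ q, I.SatAtom v α

/-- `I ⊨ q` for a UCQ `q`: some disjunct is satisfied. -/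
def Interp.SatUCQ (I : Interp) (q : UCQ) : Prop := ∃ p ∈ q, I.SatCQ p

/-- `A ∪ O ⊨ Q(a)` for an atomic query. -/
def EntailsAQ (A : ABox) (O : Ontology) (Q a : ℕ) : Prop :=
  ∀ I : Interp, I.IsModelOf O → I.SatABox A → I.indI a ∈ I.concI Q

/-- `A ∪ O ⊨ q` for a CQ. -/
def EntailsCQ (A : ABox) (O : Ontology) (q : CQ) : Prop :=
  ∀ I : Interp, I.IsModelOf O → I.SatABox A → I.SatCQ q

/-- `A ∪ O ⊨ q` for a UCQ. -/
def EntailsUCQ (A : ABox) (O : Ontology) (q : UCQ) : Prop :=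
  ∀ I : Interp, I.IsModelOf O → I.SatABox A → I.SatUCQ q

/-! ## Examples and fitting -/

/-- An ABox-AQ example `(𝒜, Q(a))`. -/
abbrev AQEx := ABox × ℕ × ℕ

/-- An ABox-CQ (in particular, ABox-FullCQ) example `(𝒜, q)`. -/
abbrev CQEx := ABox × CQ

/-- An ABox-UCQ example `(𝒜, q)`. -/
abbrev UEx := ABox × UCQ

/-- `O` fits a collection of labeled ABox(-consistency) examples. -/
def FitsCons (O : Ontology) (Ep En : Finset ABox) : Prop :=
  (∀ A ∈ Ep, ConsistentWith A O) ∧ (∀ A ∈ En, ¬ ConsistentWith A O)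

/-- `O` fits a collection of labeled ABox-AQ examples. -/
def FitsAQ (O : Ontology) (Ep En : Finset AQEx) : Prop :=
  (∀ e ∈ Ep, EntailsAQ e.1 O e.2.1 e.2.2) ∧ (∀ e ∈ En, ¬ EntailsAQ e.1 O e.2.1 e.2.2)

/-- `O` fits a collection of labeled ABox-CQ examples. -/
def FitsCQ (O : Ontology) (Ep En : Finset CQEx) : Prop :=
  (∀ e ∈ Ep, EntailsCQ e.1 O e.2) ∧ (∀ e ∈ En, ¬ EntailsCQ e.1 O e.2)

/-- `O` fits a collection of labeled ABox-UCQ examples. -/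
def FitsUCQ (O : Ontology) (Ep En : Finset UEx) : Prop :=
  (∀ e ∈ Ep, EntailsUCQ e.1 O e.2) ∧ (∀ e ∈ En, ¬ EntailsUCQ e.1 O e.2)

/-- An example `(A, q)` is inconsistent if every ALCI-ontology `O` with
`A ∪ O ⊨ q` is inconsistent with `A`. -/
def InconsistentEx (A : ABox) (q : CQ) : Prop :=
  ∀ O : Ontology, OntologyInLang DL.alci O → EntailsCQ A O q → ¬ ConsistentWith A O

/-! ## Completions and refutation candidates -/

/-- The disjoint union `A⁻` of the ABoxes of the negative AQ examples
(the ABoxes of a collection have pairwise disjoint individual names, so the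
disjoint union is the plain union). -/
def NegUnionAQ (En : Finset AQEx) : ABox := En.sup Prod.fst

/-- The disjoint union `A⁻` of the ABoxes of the negative CQ examples. -/
def NegUnionCQ (En : Finset CQEx) : ABox := En.sup Prod.fst

/-- A completion for a collection of ABox-AQ examples: extends `A⁻` by concept
assertions `Q(b)` with `b ∈ ind(A⁻)` and `Q` occurring as an AQ in `E⁺`. -/
def IsCompletionAQ (Ep En : Finset AQEx) (C : ABox) : Prop :=
  NegUnionAQ En ⊆ C ∧
  ∀ α ∈ C, α ∈ NegUnionAQ En ∨
    ∃ Q b, α = Assertion.conc Q b ∧ b ∈ ABoxInds (NegUnionAQ En) ∧ ∃ e ∈ Ep, e.2.1 = Q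

/-- Refutation candidates for a collection of ABox-AQ examples. -/
inductive RefCandAQ (Ep : Finset AQEx) (base : ABox) : ABox → Prop
  | base : RefCandAQ Ep base base
  | step {C : ABox} {A : ABox} {Q a : ℕ} {h : ℕ → ℕ} :
      RefCandAQ Ep base C → (A, Q, a) ∈ Ep → ABoxHom h A C →
      RefCandAQ Ep base (insert (Assertion.conc Q (h a)) C)

/-- A completion for a collection of ABox-FullCQ examples: extends `A⁻` by
concept assertions `Q(b)` with `b ∈ ind(A⁻)` and `Q` occurring in a query of a
positive example. -/
def IsCompletionCQ (Ep En : Finset CQEx) (C : ABox) : Prop :=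
  NegUnionCQ En ⊆ C ∧
  ∀ α ∈ C, α ∈ NegUnionCQ En ∨
    ∃ Q b, α = Assertion.conc Q b ∧ b ∈ ABoxInds (NegUnionCQ En) ∧ ∃ e ∈ Ep, Q ∈ CQCNs e.2

/-- Refutation candidates for a collection of ABox-FullCQ examples. -/
inductive RefCandCQ (Ep : Finset CQEx) (base : ABox) : ABox → Prop
  | base : RefCandCQ Ep base base
  | step {C : ABox} {A : ABox} {q : CQ} {Q a : ℕ} {h : ℕ → ℕ} :
      RefCandCQ Ep base C → (A, q) ∈ Ep → ¬ InconsistentEx A q → ABoxHom h A C →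
      Atom.catom Q (Term.ind a) ∈ q →
      RefCandCQ Ep base (insert (Assertion.conc Q (h a)) C)

/-! ## Forest models, unravelings and `I_{A,h,L}` -/

/-- The edge relation of the graph of a forest model: some role edge, excluding
pairs of ABox individuals. -/
def ForestEdge (I : Interp) (A : ABox) (d e : I.Dom) : Prop :=
  (∃ r, (d, e) ∈ I.roleI r) ∧
  ¬ ∃ a ∈ ABoxInds A, ∃ b ∈ ABoxInds A, d = I.indI a ∧ e = I.indI b

/-- The undirected version of the graph of a forest model. -/
def ForestGraph (I : Interp) (A : ABox) : SimpleGraph I.Dom where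
  Adj d e := d ≠ e ∧ (ForestEdge I A d e ∨ ForestEdge I A e d)
  symm := ⟨fun _ _ h => ⟨h.1.symm, h.2.symm⟩⟩
  loopless := ⟨fun _ h => h.1 rfl⟩

/-- `I` is an `L`-forest model of the ABox `A`:
it is a model of `A`; role edges among ABox individuals are exactly those
asserted in `A`; and the remaining role edges form a forest (for ALC a
directed forest whose edges point away from the roots, for ALCI an
undirected forest). -/
def IsForestModel (L : DL) (I : Interp) (A : ABox) : Prop :=
  I.SatABox A ∧
  (∀ r a b, a ∈ ABoxInds A → b ∈ ABoxInds A →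
    ((I.indI a, I.indI b) ∈ I.roleI r ↔ Assertion.role r a b ∈ A)) ∧
  (match L with
    | DL.alc =>
        (∀ e : I.Dom, {d : I.Dom | ForestEdge I A d e}.Subsingleton) ∧
        WellFounded (fun d e : I.Dom => ForestEdge I A d e)
    | DL.alci =>
        (∀ d : I.Dom, ¬ ForestEdge I A d d) ∧ (ForestGraph I A).IsAcyclic)

/-- `e` is a neighbor of `d` in `I`. -/
def Neighbor (I : Interp) (d e : I.Dom) : Prop :=
  ∃ r, (d, e) ∈ I.roleI r ∨ (e, d) ∈ I.roleI r

/-- The degree of `I` (maximal number of neighbors) is at most `n`. -/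
def DegreeLE (I : Interp) (n : ℕ) : Prop :=
  ∀ d : I.Dom, ∃ s : Finset I.Dom, s.card ≤ n ∧ ∀ e : I.Dom, Neighbor I d e → e ∈ s

/-- The disjoint union of a family of interpretations (`pick` chooses, for
every individual name, the component interpreting it). -/
def Interp.disjUnion {ι : Type} (J : ι → Interp) (pick : ℕ → ι) : Interp where
  Dom := Σ i : ι, (J i).Dom
  indI := fun n => ⟨pick n, (J (pick n)).indI n⟩
  indI_inj := by
    intro m n hmn
    obtain ⟨h1, h2⟩ := Sigma.ext_iff.mp hmn
    dsimp only at h1 h2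
    rw [h1] at h2
    exact (J (pick n)).indI_inj (eq_of_heq h2)
  concI := fun P => {x | x.2 ∈ (J x.1).concI P}
  roleI := fun r => {p | ∃ (i : ι) (d e : (J i).Dom),
    p = (⟨i, d⟩, ⟨i, e⟩) ∧ (d, e) ∈ (J i).roleI r}

/-- `l` is a path in `I` starting at `d` (for `L = ALC`, only role names may
occur on the path; for `L = ALCI` also inverse roles). -/
def IsPathFrom (L : DL) (I : Interp) : I.Dom → List (DLRole × I.Dom) → Prop
  | _, [] => True
  | d, (r, e) :: l =>
      (d, e) ∈ I.rSem r ∧ (L = DL.alc → ∃ m, r = DLRole.name m) ∧ IsPathFrom L I e l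

/-- The tail (last element) of a path starting at `d`. -/
def PathTail (I : Interp) (d : I.Dom) (l : List (DLRole × I.Dom)) : I.Dom :=
  (l.getLast?).elim d Prod.snd

/-- Domain of `I_{A,h,L}`: individual names plus, for every individual name,
paths in `I` (elements not corresponding to `ind(A)` or to valid nonempty
paths are unlabeled and isolated junk). -/
abbrev IAhDom (I : Interp) : Type := ℕ ⊕ (ℕ × List (DLRole × I.Dom))

/-- The element of `I_{A,h,L}` given by the path `l` attached at individual
`a`; the root (empty path) is identified with `a` itself. -/
def IAhNode (I : Interp) (a : ℕ) : List (DLRole × I.Dom) → IAhDom I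
  | [] => Sum.inl a
  | l => Sum.inr (a, l)

/-- Validity of a path attached at `a` in `I_{A,h,L}`. -/
def IAhValid (L : DL) (I : Interp) (A : ABox) (h : ℕ → I.Dom)
    (a : ℕ) (l : List (DLRole × I.Dom)) : Prop :=
  a ∈ ABoxInds A ∧ IsPathFrom L I (h a) l

/-- The interpretation `I_{A,h,L}`: start from the interpretation with domain
`ind(A)`, concept memberships induced from `I` via `h`, and role edges exactly
the role assertions of `A`; then disjointly attach, for every `a ∈ ind(A)`,
the `L`-unraveling of `I` at `h(a)`, identifying its root with `a`. -/
def IAh (L : DL) (I : Interp) (A : ABox) (h : ℕ → I.Dom) : Interp where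
  Dom := IAhDom I
  indI := Sum.inl
  indI_inj := Sum.inl_injective
  concI := fun P => {x : IAhDom I |
    (∃ a, x = Sum.inl a ∧ a ∈ ABoxInds A ∧ h a ∈ I.concI P) ∨
    (∃ a l, x = Sum.inr (a, l) ∧ l ≠ [] ∧ IAhValid L I A h a l ∧
      PathTail I (h a) l ∈ I.concI P)}
  roleI := fun r => {p : IAhDom I × IAhDom I |
    (∃ a b, p.1 = Sum.inl a ∧ p.2 = Sum.inl b ∧ Assertion.role r a b ∈ A) ∨
    (∃ a l e, IAhValid L I A h a (l ++ [(DLRole.name r, e)]) ∧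
      p.1 = IAhNode I a l ∧ p.2 = IAhNode I a (l ++ [(DLRole.name r, e)])) ∨
    (∃ a l e, IAhValid L I A h a (l ++ [(DLRole.inv r, e)]) ∧
      p.1 = IAhNode I a (l ++ [(DLRole.inv r, e)]) ∧ p.2 = IAhNode I a l)}

/-- Restriction of an interpretation to the elements satisfying `P`
(elements outside `P` become unlabeled and isolated). -/
def Interp.restrictP (I : Interp) (P : I.Dom → Prop) : Interp where
  Dom := I.Dom
  indI := I.indI
  indI_inj := I.indI_inj
  concI := fun Q => {d | d ∈ I.concI Q ∧ P d}
  roleI := fun r => {p | p ∈ I.roleI r ∧ P p.1 ∧ P p.2}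

/-- Depth of elements of `I_{A,h,L}` (ABox individuals have depth 0). -/
def IAhDepthLE (I : Interp) (n : ℕ) : IAhDom I → Prop
  | Sum.inl _ => True
  | Sum.inr al => al.2.length ≤ n

/-! ## Sizes -/

/-- Size of a UCQ (number of atoms). -/
def UCQSize (q : UCQ) : ℕ := q.sum Finset.card

/-- Size of an ABox-UCQ example. -/
def UExSize (e : UEx) : ℕ := e.1.card + UCQSize e.2

/-- Size `||E||` of a collection of ABox-UCQ examples. -/
def ESize (Ep En : Finset UEx) : ℕ := Ep.sum UExSize + En.sum UExSize

/-- The (exponential) bound `bound(E)` on the degree: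
`||E⁻||` plus the sum over positive examples `(A,q)` of `(||(A,q)||+1)^{||q||}`. -/
def EBound (Ep En : Finset UEx) : ℕ :=
  En.sum UExSize + Ep.sum (fun e => (UExSize e + 1) ^ UCQSize e.2)

/-! ## Connectivity, components, variations -/

def ABoxAdj (A : ABox) (a b : ℕ) : Prop :=
  ∃ r, Assertion.role r a b ∈ A ∨ Assertion.role r b a ∈ A

/-- Connectivity of individuals in an ABox. -/
def ABoxConn (A : ABox) : ℕ → ℕ → Prop := Relation.ReflTransGen (ABoxAdj A)

/-- `B` is a maximally connected component of the ABox `A`. -/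
def IsComponent (B A : ABox) : Prop :=
  ∃ a ∈ ABoxInds A, ∀ α : Assertion,
    α ∈ B ↔ α ∈ A ∧ ∀ c ∈ AssertionInds α, ABoxConn A a c

def AtomTerms : Atom → Finset Term
  | .catom _ t => {t}
  | .ratom _ t t' => {t, t'}

/-- The terms (variables and individuals) occurring in a CQ. -/
def CQTerms (q : CQ) : Finset Term := q.biUnion AtomTerms

def CQAdj (q : CQ) (t t' : Term) : Prop :=
  ∃ r, Atom.ratom r t t' ∈ q ∨ Atom.ratom r t' t ∈ q

/-- A CQ is connected. -/
def CQConnected (q : CQ) : Prop :=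
  ∀ t ∈ CQTerms q, ∀ t' ∈ CQTerms q, Relation.ReflTransGen (CQAdj q) t t'

def SubstTerm (σ : ℕ → Term) : Term → Term
  | .var x => σ x
  | .ind a => Term.ind a

def SubstAtom (σ : ℕ → Term) : Atom → Atom
  | .catom P t => Atom.catom P (SubstTerm σ t)
  | .ratom r t t' => Atom.ratom r (SubstTerm σ t) (SubstTerm σ t')

/-- An `A`-variation of a CQ `p`: consistently replace zero or more variables by
individual names from `ind(A)` and possibly identify variables. -/
def IsVariation (A : ABox) (p p' : CQ) : Prop :=
  ∃ σ : ℕ → Term,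
    (∀ x : ℕ, (∃ y, σ x = Term.var y) ∨ ∃ a ∈ ABoxInds A, σ x = Term.ind a) ∧
    p' = p.image (SubstAtom σ)

def Assertion.toAtom : Assertion → Atom
  | .conc P a => Atom.catom P (Term.ind a)
  | .role r a b => Atom.ratom r (Term.ind a) (Term.ind b)

/-- The interpretation `I_q` induced by a CQ. -/
def CQInterp (p : CQ) : Interp where
  Dom := Term
  indI := Term.ind
  indI_inj := fun _ _ hab => Term.ind.inj hab
  concI := fun P => {t | Atom.catom P t ∈ p}
  roleI := fun r => {tt | Atom.ratom r tt.1 tt.2 ∈ p}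

/-- A proper `A`-variation. -/
def IsProperVariation (L : DL) (A : ABox) (p p' : CQ) : Prop :=
  IsVariation A p p' ∧
  (∀ r a b, Atom.ratom r (Term.ind a) (Term.ind b) ∈ p' → Assertion.role r a b ∈ A) ∧
  IsForestModel L (CQInterp p') (A.filter fun α => α.toAtom ∈ p')

/-- A weak homomorphism from a CQ into an interpretation (need not be the
identity on individual names). -/
def WeakHom (I : Interp) (g : Term → I.Dom) (p : CQ) : Prop :=
  (∀ P t, Atom.catom P t ∈ p → g t ∈ I.concI P) ∧
  (∀ r t t', Atom.ratom r t t' ∈ p → (g t, g t') ∈ I.roleI r)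

def ReachStep (L : DL) (I : Interp) (d e : I.Dom) : Prop :=
  match L with
  | DL.alc => ∃ r, (d, e) ∈ I.roleI r
  | DL.alci => ∃ r, (d, e) ∈ I.roleI r ∨ (e, d) ∈ I.roleI r

/-- `L`-reachability in an interpretation. -/
def Reach (L : DL) (I : Interp) : I.Dom → I.Dom → Prop :=
  Relation.ReflTransGen (ReachStep L I)

/-- Compatibility of a weak homomorphism `g` (from `p'` to `I`) with a
homomorphism `h` (from `A` to `I`). -/
def CompatibleWith (L : DL) (I : Interp) (A : ABox) (h : ℕ → I.Dom)
    (p' : CQ) (g : Term → I.Dom) : Prop :=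
  (∀ a ∈ CQInds p', g (Term.ind a) = h a) ∧
  (∀ x : ℕ, Term.var x ∈ CQTerms p' →
    ∃ a ∈ ABoxInds A, Reach L I (h a) (g (Term.var x)))

/-- Query classes. -/
inductive QClass : Type
  | aq
  | fullcq
  | cq
  | ucq

/-- A UCQ belongs to a query class. -/
def UCQInClass : QClass → UCQ → Prop
  | .aq, q => ∃ Q a, q = {({Atom.catom Q (Term.ind a)} : CQ)}
  | .fullcq, q => ∃ p : CQ, q = {p} ∧ CQIsFull p
  | .cq, q => ∃ p : CQ, q = {p}
  | .ucq, _ => True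


/-!
A fitting ontology `O` may itself mention `X`. Swapping `X` with a concept name `Y` fresh for
`O` and `E` fixes every name of `E`, so the renamed ontology still fits `E` and is still
consistent with the positive ABoxes. As it no longer mentions `X`, interpreting `X` as empty in a
model witnessing consistency refutes every `X(a)`. Conversely, a model refuting `X(a)` witnesses
consistency.
-/

def Concept.cns : Concept → Finset ℕ
  | .top => ∅
  | .atom A => {A}
  | .neg C => C.cns
  | .inter C D => C.cns ∪ D.cns
  | .ex _ C => C.cns
  | .atLeast _ _ C => C.cns
  | .atMost _ _ C => C.cns

def Concept.rename (π : ℕ → ℕ) : Concept → Concept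
  | .top => .top
  | .atom A => .atom (π A)
  | .neg C => .neg (C.rename π)
  | .inter C D => .inter (C.rename π) (D.rename π)
  | .ex r C => .ex r (C.rename π)
  | .atLeast n r C => .atLeast n r (C.rename π)
  | .atMost n r C => .atMost n r (C.rename π)

lemma Concept.invFree_rename {π : ℕ → ℕ} {C : Concept} (h : C.invFree) :
    (C.rename π).invFree := by
  induction C <;> simp_all [Concept.invFree, Concept.rename]

lemma Concept.countFree_rename {π : ℕ → ℕ} {C : Concept} (h : C.countFree) :
    (C.rename π).countFree := by
  induction C <;> simp_all [Concept.countFree, Concept.rename]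

lemma Concept.cns_rename (π : ℕ → ℕ) (C : Concept) :
    (C.rename π).cns = C.cns.image π := by
  induction C <;> simp_all [Concept.cns, Concept.rename, Finset.image_union]

def Ontology.cns (O : Ontology) : Finset ℕ := O.biUnion fun ci => ci.1.cns ∪ ci.2.cns

def Ontology.rename (π : ℕ → ℕ) (O : Ontology) : Ontology :=
  O.image fun ci => (ci.1.rename π, ci.2.rename π)

lemma Ontology.cns_rename (π : ℕ → ℕ) (O : Ontology) :
    (O.rename π).cns = O.cns.image π := by
  simp only [Ontology.cns, Ontology.rename, Finset.biUnion_image, Concept.cns_rename,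
    ← Finset.image_union, Finset.image_biUnion]

lemma OntologyInLang.rename {L : DL} {O : Ontology} (hO : OntologyInLang L O) (π : ℕ → ℕ) :
    OntologyInLang L (O.rename π) := by
  cases L <;>
  · simp only [OntologyInLang, Ontology.rename, Finset.forall_mem_image] at hO ⊢
    intro ci hci
    have := hO ci hci
    simp_all [Concept.invFree_rename, Concept.countFree_rename]

lemma Ontology.exists_perm_notMem_cns_rename (O : Ontology) {S : Finset ℕ} {X : ℕ}
    (hX : X ∉ S) : ∃ σ : Equiv.Perm ℕ, (∀ P ∈ S, σ P = P) ∧ X ∉ (O.rename σ).cns := by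
  obtain ⟨Y, hY⟩ := Infinite.exists_notMem_finset (O.cns ∪ S)
  rw [Finset.mem_union, not_or] at hY
  refine ⟨Equiv.swap X Y, fun P hP => Equiv.swap_apply_of_ne_of_ne
    (ne_of_mem_of_not_mem hP hX) (ne_of_mem_of_not_mem hP hY.2), ?_⟩
  rw [Ontology.cns_rename, Finset.mem_image]
  rintro ⟨P, hP, hPX⟩
  rw [Equiv.swap_apply_eq_iff, Equiv.swap_apply_left] at hPX
  exact hY.1 (hPX ▸ hP)

def Interp.withConcI (I : Interp) (g : ℕ → Set I.Dom) : Interp :=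
  ⟨I.Dom, I.indI, I.indI_inj, g, I.roleI⟩

section withConcI

variable (I : Interp) (g : ℕ → Set I.Dom)

lemma Interp.rSem_withConcI (r : DLRole) : (I.withConcI g).rSem r = I.rSem r := by
  cases r <;> rfl

lemma Interp.cSem_withConcI {C : Concept} (h : ∀ P ∈ C.cns, g P = I.concI P) :
    (I.withConcI g).cSem C = I.cSem C := by
  induction C with
  | top => rfl
  | atom A => exact h A (by simp [Concept.cns])
  | neg C ih => simp only [Interp.cSem, ih h]; rfl
  | inter C D ihC ihD =>
      simp only [Concept.cns, Finset.mem_union] at h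
      simp only [Interp.cSem, ihC fun P hP => h P (.inl hP), ihD fun P hP => h P (.inr hP)]; rfl
  | ex r C ih | atLeast n r C ih | atMost n r C ih =>
      simp only [Interp.cSem, Interp.rSem_withConcI, ih h]; rfl

lemma Interp.cSem_rename (π : ℕ → ℕ) (C : Concept) :
    I.cSem (C.rename π) = (I.withConcI (I.concI ∘ π)).cSem C := by
  induction C with
  | top | atom A => rfl
  | neg C ih => simp only [Concept.rename, Interp.cSem, ih]; rfl
  | inter C D ihC ihD => simp only [Concept.rename, Interp.cSem, ihC, ihD]; rfl
  | ex r C ih | atLeast n r C ih | atMost n r C ih =>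
      simp only [Concept.rename, Interp.cSem, ih, Interp.rSem_withConcI]; rfl

lemma Interp.isModelOf_withConcI {O : Ontology} (h : ∀ P ∈ O.cns, g P = I.concI P) :
    (I.withConcI g).IsModelOf O ↔ I.IsModelOf O := by
  refine forall₂_congr fun ci hci => ?_
  have hci : ∀ P ∈ ci.1.cns ∪ ci.2.cns, g P = I.concI P := fun P hP =>
    h P (Finset.mem_biUnion.mpr ⟨ci, hci, hP⟩)
  rw [I.cSem_withConcI g fun P hP => hci P (Finset.mem_union_left _ hP),
    I.cSem_withConcI g fun P hP => hci P (Finset.mem_union_right _ hP)]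
  exact Iff.rfl

lemma Interp.isModelOf_rename (π : ℕ → ℕ) (O : Ontology) :
    I.IsModelOf (O.rename π) ↔ (I.withConcI (I.concI ∘ π)).IsModelOf O := by
  simp only [Interp.IsModelOf, Ontology.rename, Finset.forall_mem_image, Interp.cSem_rename]
  exact Iff.rfl

lemma Interp.satABox_withConcI {A : ABox} (h : ∀ P ∈ ABoxCNs A, g P = I.concI P) :
    (I.withConcI g).SatABox A ↔ I.SatABox A := by
  refine forall₂_congr fun α hα => ?_
  cases α with
  | conc P a =>
      show I.indI a ∈ g P ↔ I.indI a ∈ I.concI P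
      rw [h P (Finset.mem_biUnion.mpr ⟨_, hα, by simp [AssertionCNs]⟩)]
  | role r a b => rfl

lemma Interp.satCQ_withConcI {q : CQ} (h : ∀ P ∈ CQCNs q, g P = I.concI P) :
    (I.withConcI g).SatCQ q ↔ I.SatCQ q := by
  refine exists_congr fun v => forall₂_congr fun α hα => ?_
  cases α with
  | catom P t =>
      show TermEval I v t ∈ g P ↔ TermEval I v t ∈ I.concI P
      rw [h P (Finset.mem_biUnion.mpr ⟨_, hα, by simp [AtomCNs]⟩)]
  | ratom r t t' => rfl

lemma Interp.satUCQ_withConcI {q : UCQ} (h : ∀ P ∈ UCQCNs q, g P = I.concI P) :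
    (I.withConcI g).SatUCQ q ↔ I.SatUCQ q :=
  exists_congr fun p => and_congr_right fun hp =>
    I.satCQ_withConcI g fun P hP => h P (Finset.mem_biUnion.mpr ⟨p, hp, hP⟩)

end withConcI

section rename

variable {A : ABox} {O : Ontology} {σ : Equiv.Perm ℕ}

lemma Interp.isModelOf_rename_withConcI_symm (I : Interp) :
    (I.withConcI (I.concI ∘ σ.symm)).IsModelOf (O.rename σ) ↔ I.IsModelOf O := by
  rw [Interp.isModelOf_rename]
  show (I.withConcI fun P => I.concI (σ.symm (σ P))).IsModelOf O ↔ _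
  simp only [Equiv.symm_apply_apply]
  rfl

lemma ConsistentWith.rename (h : ConsistentWith A O) (hA : ∀ P ∈ ABoxCNs A, σ P = P) :
    ConsistentWith A (O.rename σ) := by
  obtain ⟨I, hO, hI⟩ := h
  refine ⟨_, I.isModelOf_rename_withConcI_symm.mpr hO, ?_⟩
  exact (I.satABox_withConcI _ fun P hP =>
    congrArg I.concI (σ.symm_apply_eq.mpr (hA P hP).symm)).mpr hI

lemma entailsUCQ_rename_iff {q : UCQ} (hA : ∀ P ∈ ABoxCNs A, σ P = P)
    (hq : ∀ P ∈ UCQCNs q, σ P = P) :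
    EntailsUCQ A (O.rename σ) q ↔ EntailsUCQ A O q := by
  constructor
  · intro h I hO hI
    have hfix : ∀ P, σ P = P → (I.concI ∘ σ.symm) P = I.concI P := fun P hP =>
      congrArg I.concI (σ.symm_apply_eq.mpr hP.symm)
    have hJ := h _ (I.isModelOf_rename_withConcI_symm.mpr hO)
      ((I.satABox_withConcI _ fun P hP => hfix P (hA P hP)).mpr hI)
    exact (I.satUCQ_withConcI _ fun P hP => hfix P (hq P hP)).mp hJ
  · intro h I hO hI
    have hfix : ∀ P, σ P = P → (I.concI ∘ σ) P = I.concI P := fun P hP =>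
      congrArg I.concI hP
    have hJ := h _ ((I.isModelOf_rename σ O).mp hO)
      ((I.satABox_withConcI _ fun P hP => hfix P (hA P hP)).mpr hI)
    exact (I.satUCQ_withConcI _ fun P hP => hfix P (hq P hP)).mp hJ

end rename

lemma ConsistentWith.of_not_entailsUCQ {A : ABox} {O : Ontology} {q : UCQ}
    (h : ¬ EntailsUCQ A O q) : ConsistentWith A O := by
  by_contra hc
  exact h fun I hO hA => absurd ⟨I, hO, hA⟩ hc

lemma not_entailsUCQ_atom_of_notMem {A : ABox} {O : Ontology} {X : ℕ}
    (hcons : ConsistentWith A O) (hO : X ∉ O.cns) (hA : X ∉ ABoxCNs A) (a : ℕ) :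
    ¬ EntailsUCQ A O {{Atom.catom X (Term.ind a)}} := by
  obtain ⟨I, hIO, hIA⟩ := hcons
  have hfix : ∀ P, P ≠ X → Function.update I.concI X ∅ P = I.concI P :=
    fun P hP => Function.update_of_ne hP _ _
  intro h
  obtain ⟨p, hp, v, hv⟩ := h (I.withConcI (Function.update I.concI X ∅))
    ((I.isModelOf_withConcI _ fun P hP => hfix P (ne_of_mem_of_not_mem hP hO)).mpr hIO)
    ((I.satABox_withConcI _ fun P hP => hfix P (ne_of_mem_of_not_mem hP hA)).mpr hIA)
  rw [Finset.mem_singleton] at hp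
  subst hp
  have hXa : I.indI a ∈ Function.update I.concI X ∅ X := hv _ (Finset.mem_singleton_self _)
  simp at hXa

theorem consistent_fitting_reduction_general (L : DL)
    (Ep En : Finset UEx) (X : ℕ) (f : UEx → ℕ)
    (hX : ∀ e ∈ Ep ∪ En, X ∉ ABoxCNs e.1 ∧ X ∉ UCQCNs e.2) :
    (∃ O : Ontology, OntologyInLang L O ∧ FitsUCQ O Ep En ∧
        ∀ e ∈ Ep, ConsistentWith e.1 O) ↔
      (∃ O : Ontology, OntologyInLang L O ∧
        FitsUCQ O Ep
          (En ∪ Ep.image fun e =>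
            (e.1, ({({Atom.catom X (Term.ind (f e))} : CQ)} : UCQ)))) := by
  constructor
  · rintro ⟨O, hL, ⟨hpos, hneg⟩, hcons⟩
    have hXE : X ∉ (Ep ∪ En).biUnion fun e => ABoxCNs e.1 ∪ UCQCNs e.2 := by
      simpa only [Finset.mem_biUnion, Finset.mem_union, not_exists, not_and, not_or] using hX
    obtain ⟨σ, hσ, hXO⟩ := O.exists_perm_notMem_cns_rename hXE
    have hfix : ∀ e ∈ Ep ∪ En, ∀ P ∈ ABoxCNs e.1 ∪ UCQCNs e.2, σ P = P := fun e he P hP =>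
      hσ P (Finset.mem_biUnion.mpr ⟨e, he, hP⟩)
    have hent : ∀ e ∈ Ep ∪ En, EntailsUCQ e.1 (O.rename σ) e.2 ↔ EntailsUCQ e.1 O e.2 :=
      fun e he => entailsUCQ_rename_iff (fun P hP => hfix e he P (Finset.mem_union_left _ hP))
        (fun P hP => hfix e he P (Finset.mem_union_right _ hP))
    refine ⟨_, hL.rename σ, fun e he => (hent e (Finset.mem_union_left _ he)).mpr (hpos e he), ?_⟩
    intro _ hmem
    rcases Finset.mem_union.mp hmem with hEn | hEp
    · exact (hent _ (Finset.mem_union_right _ hEn)).not.mpr (hneg _ hEn)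
    · obtain ⟨e, he, rfl⟩ := Finset.mem_image.mp hEp
      have hE : e ∈ Ep ∪ En := Finset.mem_union_left _ he
      exact not_entailsUCQ_atom_of_notMem
        ((hcons e he).rename fun P hP => hfix e hE P (Finset.mem_union_left _ hP)) hXO (hX e hE).1 _
  · rintro ⟨O, hL, hpos, hneg⟩
    refine ⟨O, hL, ⟨hpos, fun e he => hneg e (Finset.mem_union_left _ he)⟩, fun e he => ?_⟩
    have hXe := hneg _ (Finset.mem_union_right _ (Finset.mem_image_of_mem _ he))
    exact .of_not_entailsUCQ hXe

/-- Reduction of consistent `(L, Q)`-ontology fitting to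
`(L, Q)`-ontology fitting, for `Q ∈ {AQ, FullCQ, CQ, UCQ}`: `E` admits a
fitting `L`-ontology consistent with all ABoxes of positive examples iff the
collection `E'`, obtained by adding for each positive example `(A, q)` a
negative example `(A, X(a))` with `X` not mentioned in `E` and `a ∈ ind(A)`,
admits a fitting `L`-ontology. -/
theorem consistent_fitting_reduction (L : DL) (Qt : QClass)
    (Ep En : Finset UEx) (X : ℕ) (f : UEx → ℕ)
    (hclass : ∀ e ∈ Ep ∪ En, UCQInClass Qt e.2)
    (hwfq : ∀ e ∈ Ep ∪ En, UCQInds e.2 ⊆ ABoxInds e.1)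
    (hdisj : PairwiseDisjInds ((Ep ∪ En).image Prod.fst))
    (hX : ∀ e ∈ Ep ∪ En, X ∉ ABoxCNs e.1 ∧ X ∉ UCQCNs e.2)
    (hf : ∀ e ∈ Ep, f e ∈ ABoxInds e.1) :
    (∃ O : Ontology, OntologyInLang L O ∧ FitsUCQ O Ep En ∧
        ∀ e ∈ Ep, ConsistentWith e.1 O) ↔
      (∃ O : Ontology, OntologyInLang L O ∧
        FitsUCQ O Ep
          (En ∪ Ep.image fun e =>
            (e.1, ({({Atom.catom X (Term.ind (f e))} : CQ)} : UCQ)))) :=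
  consistent_fitting_reduction_general L Ep En X f hX

end DLFit
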